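/- Let W_{n,n+1} = { f ∈ C([0,1], M_n ⊗ M_{n+1}) : f(0) = a ⊗ 1_{n+1}, f(1) = a ⊗ 1_n for some a ∈ M_n } (where 1_n inside M_{n+1} means the projection Σ_{i=1}^n e_{ii}). Define φ : M_n → W_{n,n+1} by φ(a)(t) = (a ⊗ 1_n) ⊕ (1−t)(a ⊗ e_{n+1,n+1}). Then φ is a well-defined completely positive contractive order zero map. -/

import Mathlib

open Matrix
open scoped Kronecker Matrix.Norms.L2Operator ComplexOrder

noncomputable section

variable (n : ℕ) [NeZero n]

/-- The rank-one projection `e_{n+1,n+1}` in `M_{n+1}`. -/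
def Elast : Matrix (Fin (n + 1)) (Fin (n + 1)) ℂ :=
  single (Fin.last n) (Fin.last n) 1

/-- The Razak building block
`W_{n,n+1} = {f ∈ C([0,1], Mₙ ⊗ M_{n+1}) : f 0 = a ⊗ 1_{n+1}, f 1 = a ⊗ 1ₙ}`. -/
def Wblock :
    Set C(Set.Icc (0 : ℝ) 1,
      Matrix (Fin n × Fin (n + 1)) (Fin n × Fin (n + 1)) ℂ) :=
  {f | ∃ a : Matrix (Fin n) (Fin n) ℂ,
    f ⟨0, by norm_num⟩ = a ⊗ₖ (1 : Matrix (Fin (n + 1)) (Fin (n + 1)) ℂ) ∧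
    f ⟨1, by norm_num⟩ = a ⊗ₖ ((1 : Matrix (Fin (n + 1)) (Fin (n + 1)) ℂ) - Elast n)}

/-- The map `φ : Mₙ → W_{n,n+1}`, `φ(a)(t) = (a ⊗ 1ₙ) ⊕ (1−t)(a ⊗ e_{n+1,n+1})`. -/
def Wphi (a : Matrix (Fin n) (Fin n) ℂ) :
    C(Set.Icc (0 : ℝ) 1,
      Matrix (Fin n × Fin (n + 1)) (Fin n × Fin (n + 1)) ℂ) :=
  ⟨fun t => a ⊗ₖ ((1 : Matrix (Fin (n + 1)) (Fin (n + 1)) ℂ) - Elast n)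
      + (1 - (t : ℝ)) • (a ⊗ₖ Elast n),
    continuous_const.add
      (((continuous_const.sub continuous_subtype_val)).smul continuous_const)⟩

/-! ### Auxiliary definitions and lemmas -/

/-- Diagonal entries of the "scaling" matrix at time `t`. -/
def dfun (t : ℝ) : Fin (n + 1) → ℝ := fun j => if j = Fin.last n then 1 - t else 1

/-- The positive contraction `P(t) = 1ₙ + (1-t) e_{n+1,n+1}` in `M_{n+1}`. -/
def Pmat (t : ℝ) : Matrix (Fin (n + 1)) (Fin (n + 1)) ℂ :=
  diagonal fun j => ((dfun n t j : ℝ) : ℂ)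

/-- Square-root version of `dfun`. -/
def qfun (t : ℝ) : Fin (n + 1) → ℝ :=
  fun j => if j = Fin.last n then Real.sqrt (1 - t) else 1

/-- The square root `Q(t)` of `P(t)`. -/
def Qmat (t : ℝ) : Matrix (Fin (n + 1)) (Fin (n + 1)) ℂ :=
  diagonal fun j => ((qfun n t j : ℝ) : ℂ)

lemma Wphi_eq (a : Matrix (Fin n) (Fin n) ℂ) (t : Set.Icc (0 : ℝ) 1) :
    Wphi n a t = a ⊗ₖ Pmat n (t : ℝ) := by
  ext ⟨i, j⟩ ⟨k, l⟩
  simp only [Wphi, ContinuousMap.coe_mk, Matrix.add_apply, Matrix.smul_apply,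
    kroneckerMap_apply, Matrix.sub_apply, Matrix.one_apply, Pmat, dfun, Elast,
    single, diagonal_apply, Matrix.of_apply, Complex.real_smul]
  by_cases hjl : j = l
  · subst hjl
    by_cases hj : j = Fin.last n
    · subst hj
      simp
      push_cast
      ring
    · simp [hj, Ne.symm hj]
  · have h2 : ¬ (Fin.last n = j ∧ Fin.last n = l) := by
      rintro ⟨rfl, rfl⟩; exact hjl rfl
    simp [hjl, h2]

lemma Qmat_mul_Qmat (t : ℝ) (ht : t ≤ 1) : Qmat n t * Qmat n t = Pmat n t := by
  ext j l
  rw [Qmat, Pmat, diagonal_mul_diagonal]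
  rcases eq_or_ne j l with rfl | hjl
  · rw [diagonal_apply_eq, diagonal_apply_eq, ← Complex.ofReal_mul]
    norm_cast
    by_cases hj : j = Fin.last n
    · simp only [qfun, dfun]
      rw [if_pos hj, if_pos hj]
      exact Real.mul_self_sqrt (by linarith)
    · simp [qfun, dfun, hj]
  · rw [diagonal_apply_ne _ hjl, diagonal_apply_ne _ hjl]

lemma Qmat_star (t : ℝ) : star (Qmat n t) = Qmat n t := by
  ext j l
  rw [Qmat, Matrix.star_eq_conjTranspose, diagonal_conjTranspose]
  rcases eq_or_ne j l with rfl | hjl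
  · rw [diagonal_apply_eq, diagonal_apply_eq]
    simp [Complex.conj_ofReal]
  · rw [diagonal_apply_ne _ hjl, diagonal_apply_ne _ hjl]

lemma kron_conjTranspose (a : Matrix (Fin n) (Fin n) ℂ)
    (P : Matrix (Fin (n + 1)) (Fin (n + 1)) ℂ) :
    (a ⊗ₖ P)ᴴ = aᴴ ⊗ₖ Pᴴ := by
  ext ⟨i, j⟩ ⟨k, l⟩
  simp [conjTranspose_apply, kroneckerMap_apply]

/-- Key norm estimate: tensoring with a diagonal contraction does not increase
the L2 operator norm. -/
lemma kron_norm_le (a : Matrix (Fin n) (Fin n) ℂ) (d : Fin (n + 1) → ℝ)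
    (hd : ∀ j, |d j| ≤ 1) :
    ‖a ⊗ₖ (diagonal fun j => ((d j : ℝ) : ℂ))‖ ≤ ‖a‖ := by
  set A := a ⊗ₖ (diagonal fun j => ((d j : ℝ) : ℂ)) with hA
  rw [l2_opNorm_def]
  refine ContinuousLinearMap.opNorm_le_bound _ (norm_nonneg a) fun x => ?_
  have hAx : ∀ p : Fin n × Fin (n + 1),
      (A *ᵥ (WithLp.equiv 2 _ x)) p
        = (d p.2 : ℂ) * (a *ᵥ fun k => x (k, p.2)) p.1 := by
    rintro ⟨i, j⟩
    simp only [hA, mulVec, dotProduct, Fintype.sum_prod_type, kroneckerMap_apply,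
      diagonal_apply]
    have h1 : ∀ k : Fin n, ∑ l, a i k * (if j = l then (d j : ℂ) else 0)
          * (WithLp.equiv 2 _ x) (k, l) = (d j : ℂ) * (a i k * x (k, j)) := by
      intro k
      have hx : ∀ p, (WithLp.equiv 2 (Fin n × Fin (n + 1) → ℂ)) x p = x p :=
        fun _ => rfl
      simp only [mul_ite, mul_zero, ite_mul, zero_mul, Finset.sum_ite_eq,
        Finset.mem_univ, if_pos, hx]
      ring
    rw [Finset.sum_congr rfl fun k _ => h1 k, ← Finset.mul_sum]
  have hxsq : ∑ p : Fin n × Fin (n + 1), ‖x p‖ ^ 2 = ‖x‖ ^ 2 := by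
    rw [EuclideanSpace.norm_eq, Real.sq_sqrt (by positivity)]
  have key : ∑ p : Fin n × Fin (n + 1), ‖(A *ᵥ (WithLp.equiv 2 _ x)) p‖ ^ 2
      ≤ (‖a‖ * ‖x‖) ^ 2 := by
    have hterm : ∀ j : Fin (n + 1),
        ∑ i, ‖(A *ᵥ (WithLp.equiv 2 _ x)) (i, j)‖ ^ 2
          ≤ ‖a‖ ^ 2 * ∑ k, ‖x (k, j)‖ ^ 2 := by
      intro j
      set v : EuclideanSpace ℂ (Fin n) := (WithLp.equiv 2 _).symm fun k => x (k, j)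
        with hv
      have hvnorm : ‖v‖ ^ 2 = ∑ k, ‖x (k, j)‖ ^ 2 := by
        rw [EuclideanSpace.norm_eq, Real.sq_sqrt (by positivity)]
        rfl
      have hmv : ‖(WithLp.equiv 2 _).symm (a *ᵥ fun k => x (k, j))‖ ≤ ‖a‖ * ‖v‖ :=
        a.l2_opNorm_mulVec v
      have hmvsq : ∑ i, ‖(a *ᵥ fun k => x (k, j)) i‖ ^ 2 ≤ (‖a‖ * ‖v‖) ^ 2 := by
        have := pow_le_pow_left₀ (norm_nonneg _) hmv 2
        rw [EuclideanSpace.norm_eq, Real.sq_sqrt (by positivity)] at this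
        exact this
      calc ∑ i, ‖(A *ᵥ (WithLp.equiv 2 _ x)) (i, j)‖ ^ 2
          = ∑ i, (d j) ^ 2 * ‖(a *ᵥ fun k => x (k, j)) i‖ ^ 2 := by
            refine Finset.sum_congr rfl fun i _ => ?_
            rw [hAx (i, j), norm_mul, mul_pow, Complex.norm_real, Real.norm_eq_abs,
              sq_abs]
        _ ≤ ∑ i, 1 * ‖(a *ᵥ fun k => x (k, j)) i‖ ^ 2 := by
            refine Finset.sum_le_sum fun i _ => ?_
            have : (d j) ^ 2 ≤ 1 := by
              rw [← sq_abs]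
              exact pow_le_one₀ (abs_nonneg _) (hd j)
            exact mul_le_mul_of_nonneg_right this (by positivity)
        _ = ∑ i, ‖(a *ᵥ fun k => x (k, j)) i‖ ^ 2 := by simp
        _ ≤ (‖a‖ * ‖v‖) ^ 2 := hmvsq
        _ = ‖a‖ ^ 2 * ∑ k, ‖x (k, j)‖ ^ 2 := by rw [mul_pow, hvnorm]
    calc ∑ p : Fin n × Fin (n + 1), ‖(A *ᵥ (WithLp.equiv 2 _ x)) p‖ ^ 2
        = ∑ j, ∑ i, ‖(A *ᵥ (WithLp.equiv 2 _ x)) (i, j)‖ ^ 2 := by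
          rw [Fintype.sum_prod_type, Finset.sum_comm]
      _ ≤ ∑ j : Fin (n + 1), ‖a‖ ^ 2 * ∑ k, ‖x (k, j)‖ ^ 2 :=
          Finset.sum_le_sum fun j _ => hterm j
      _ = ‖a‖ ^ 2 * ∑ j, ∑ k, ‖x (k, j)‖ ^ 2 := by rw [Finset.mul_sum]
      _ = ‖a‖ ^ 2 * ∑ p : Fin n × Fin (n + 1), ‖x p‖ ^ 2 := by
          rw [Fintype.sum_prod_type, Finset.sum_comm]
      _ = (‖a‖ * ‖x‖) ^ 2 := by rw [hxsq, mul_pow]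
  rw [EuclideanSpace.norm_eq]
  refine le_trans (Real.sqrt_le_sqrt ?_) (le_of_eq (Real.sqrt_sq (by positivity)))
  exact key

lemma Qmat_continuous : Continuous fun t : Set.Icc (0 : ℝ) 1 => Qmat n (t : ℝ) := by
  apply continuous_matrix
  intro j l
  by_cases hjl : j = l
  · subst hjl
    by_cases hj : j = Fin.last n
    · simp only [Qmat, qfun, diagonal_apply, if_pos rfl, hj]
      exact Complex.continuous_ofReal.comp
        (Real.continuous_sqrt.comp (continuous_const.sub continuous_subtype_val))
    · simp only [Qmat, qfun, diagonal_apply, if_pos rfl, hj, if_false]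
      exact continuous_const
  · simp only [Qmat, diagonal_apply, if_neg hjl]
    exact continuous_const

/-- `φ` is a well-defined completely positive contractive order zero map
from `Mₙ` into `W_{n,n+1}`. -/
theorem stmt13 :
    (∀ a, Wphi n a ∈ Wblock n) ∧
    -- linearity (well-definedness as a linear map)
    (∀ a b, Wphi n (a + b) = Wphi n a + Wphi n b) ∧
    (∀ (c : ℂ) a, Wphi n (c • a) = c • Wphi n a) ∧
    -- contractivity
    (∀ a, ‖Wphi n a‖ ≤ ‖a‖) ∧
    -- complete positivity
    (∀ (k : ℕ) (b : Fin k → Matrix (Fin n) (Fin n) ℂ)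
        (c : Fin k → C(Set.Icc (0 : ℝ) 1,
          Matrix (Fin n × Fin (n + 1)) (Fin n × Fin (n + 1)) ℂ)),
      ∃ d, ∑ i, ∑ j, star (c i) * Wphi n (star (b i) * b j) * c j = star d * d) ∧
    -- order zero: orthogonal positive elements map to orthogonal elements
    (∀ a b : Matrix (Fin n) (Fin n) ℂ, a.PosSemidef → b.PosSemidef →
      a * b = 0 → Wphi n a * Wphi n b = 0) := by
  have hP0 : Pmat n (0 : ℝ) = 1 := by
    rw [Pmat]
    have : (fun j : Fin (n + 1) => ((dfun n 0 j : ℝ) : ℂ)) = fun _ => 1 := by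
      funext j; simp [dfun]
    rw [this, diagonal_one]
  have hP1 : Pmat n (1 : ℝ) = 1 - Elast n := by
    ext j l
    simp only [Pmat, dfun, diagonal_apply, Matrix.sub_apply, Matrix.one_apply,
      Elast, single, Matrix.of_apply]
    by_cases hjl : j = l
    · subst hjl
      by_cases hj : j = Fin.last n
      · subst hj; simp
      · simp [hj, Ne.symm hj]
    · have h2 : ¬ (Fin.last n = j ∧ Fin.last n = l) := by
        rintro ⟨rfl, rfl⟩; exact hjl rfl
      simp [hjl, h2]
  refine ⟨?_, ?_, ?_, ?_, ?_, ?_⟩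
  · -- membership
    intro a
    refine ⟨a, ?_, ?_⟩
    · rw [Wphi_eq]; simp [hP0]
    · rw [Wphi_eq]; simp [hP1]
  · -- additivity
    intro a b
    ext t
    simp only [Wphi_eq, ContinuousMap.add_apply, add_kronecker]
  · -- homogeneity
    intro c a
    ext t
    simp only [Wphi_eq, ContinuousMap.smul_apply, smul_kronecker]
  · -- contractivity
    intro a
    refine (ContinuousMap.norm_le _ (norm_nonneg a)).mpr fun t => ?_
    rw [Wphi_eq, Pmat]
    refine kron_norm_le n a _ fun j => ?_
    rw [dfun]
    rcases t with ⟨t, ht0, ht1⟩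
    by_cases hj : j = Fin.last n <;> simp [hj, abs_le] <;> constructor <;> linarith
  · -- complete positivity
    intro k b c
    have hcont : Continuous (fun t : Set.Icc (0 : ℝ) 1 =>
        ∑ i, (b i ⊗ₖ Qmat n (t : ℝ)) * (c i t)) := by
      apply continuous_finset_sum
      intro i _
      refine Continuous.matrix_mul ?_ (c i).continuous
      apply continuous_matrix
      rintro ⟨r, s⟩ ⟨u, v⟩
      exact continuous_const.mul ((Qmat_continuous n).matrix_elem s v)
    refine ⟨⟨_, hcont⟩, ?_⟩
    refine ContinuousMap.ext fun t => ?_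
    have hts : (t : ℝ) ≤ 1 := t.2.2
    set X : Fin k → Matrix (Fin n × Fin (n + 1)) (Fin n × Fin (n + 1)) ℂ :=
      fun i => (b i ⊗ₖ Qmat n (t : ℝ)) * (c i t) with hX
    have hij : ∀ i j, star (X i) * X j
        = star (c i t) * ((star (b i) * b j) ⊗ₖ Pmat n (t : ℝ)) * c j t := by
      intro i j
      have hkr : (b i)ᴴ ⊗ₖ (Qmat n (t : ℝ))ᴴ * (b j ⊗ₖ Qmat n (t : ℝ))
          = (star (b i) * b j) ⊗ₖ Pmat n (t : ℝ) := by
        rw [← mul_kronecker_mul, ← Matrix.star_eq_conjTranspose (Qmat n (t : ℝ)),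
          Qmat_star, Qmat_mul_Qmat n (t : ℝ) hts]
        rfl
      rw [hX, StarMul.star_mul, Matrix.star_eq_conjTranspose ((b i) ⊗ₖ Qmat n (t : ℝ)),
        kron_conjTranspose, mul_assoc, ← mul_assoc ((b i)ᴴ ⊗ₖ (Qmat n (t : ℝ))ᴴ),
        hkr, ← mul_assoc]
    calc (∑ i, ∑ j, star (c i) * Wphi n (star (b i) * b j) * c j) t
        = ∑ i, ∑ j, star (c i t) * ((star (b i) * b j) ⊗ₖ Pmat n (t : ℝ)) * c j t := by
          rw [ContinuousMap.sum_apply]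
          refine Finset.sum_congr rfl fun i _ => ?_
          rw [ContinuousMap.sum_apply]
          refine Finset.sum_congr rfl fun j _ => ?_
          rw [ContinuousMap.mul_apply, ContinuousMap.mul_apply, Wphi_eq]
          rfl
      _ = ∑ i, ∑ j, star (X i) * X j := by
          exact Finset.sum_congr rfl fun i _ => Finset.sum_congr rfl fun j _ =>
            (hij i j).symm
      _ = star (∑ i, X i) * ∑ j, X j := by
          rw [star_sum, Finset.sum_mul]
          exact Finset.sum_congr rfl fun i _ => (Finset.mul_sum _ _ _).symm
      _ = (star (⟨_, hcont⟩ : C(Set.Icc (0 : ℝ) 1,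
            Matrix (Fin n × Fin (n + 1)) (Fin n × Fin (n + 1)) ℂ))
          * ⟨_, hcont⟩) t := rfl
  · -- order zero
    intro a b _ _ hab
    ext t
    rw [ContinuousMap.mul_apply, Wphi_eq, Wphi_eq, ← mul_kronecker_mul, hab,
      zero_kronecker]
    rfl

end
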